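/- Residual entropy is monotone under refinement: if π_a and π_b are partitions of {1,…,n} and π_b is finer than π_a (every cell of π_b is contained in a cell of π_a), then R(π_b) ≤ R(π_a), where for a partition π = (α_1|…|α_m) we set R(π) = Σ_{k=1}^m H(X^{α_k} | X^{α_1},…,X^{α_{k−1}}, X^{α_{k+1}},…,X^{α_m}). -/
import Mathlib


open Finset

noncomputable section

variable {Ω : Type*} [Fintype Ω]

/-- Probability of the event `A ⊆ Ω` under the probability mass function `p`. -/
def probOf (p : Ω → ℝ) (A : Finset Ω) : ℝ := ∑ ω ∈ A, p ω

/-- Shannon entropy (in bits, i.e. logarithm base 2) of the discrete random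
variable `X` defined on the finite probability space with mass function `p`. -/
def shEnt {S : Type*} [Fintype S] [DecidableEq S] (p : Ω → ℝ) (X : Ω → S) : ℝ :=
  -∑ s : S, probOf p (univ.filter fun ω => X ω = s) *
      Real.logb 2 (probOf p (univ.filter fun ω => X ω = s))

/-- Mutual information `I(X;Y)`. -/
def mutInfo {S T : Type*} [Fintype S] [DecidableEq S] [Fintype T] [DecidableEq T]
    (p : Ω → ℝ) (X : Ω → S) (Y : Ω → T) : ℝ :=
  shEnt p X + shEnt p Y - shEnt p (fun ω => (X ω, Y ω))

/-- Conditional mutual information `I(X;Y∣Z)`. -/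
def condMutInfo {S T U : Type*} [Fintype S] [DecidableEq S] [Fintype T] [DecidableEq T]
    [Fintype U] [DecidableEq U] (p : Ω → ℝ) (X : Ω → S) (Y : Ω → T) (Z : Ω → U) : ℝ :=
  shEnt p (fun ω => (X ω, Z ω)) + shEnt p (fun ω => (Y ω, Z ω))
    - shEnt p (fun ω => (X ω, Y ω, Z ω)) - shEnt p Z

variable {n : ℕ} {S : Fin n → Type*} [∀ i, Fintype (S i)] [∀ i, DecidableEq (S i)]

/-- The sub-vector `X^γ` of the tuple of random variables `X`. -/
def restrict (X : ∀ i, Ω → S i) (γ : Finset (Fin n)) : Ω → ∀ i : γ, S i.1 :=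
  fun ω i => X i.1 ω

/-- Joint Shannon entropy `H(X^γ)` of the sub-vector indexed by `γ`. -/
def subEnt (p : Ω → ℝ) (X : ∀ i, Ω → S i) (γ : Finset (Fin n)) : ℝ :=
  shEnt p (restrict X γ)

/-- Total correlation `C(X^γ)`: sum of marginal entropies minus joint entropy. -/
def totCorr (p : Ω → ℝ) (X : ∀ i, Ω → S i) (γ : Finset (Fin n)) : ℝ :=
  (∑ i ∈ γ, shEnt p (X i)) - subEnt p X γ

/-- Binding entropy `B(X^γ)`: joint entropy minus the sum of the residual
entropies `R_j = H(X_j ∣ X^γ_{-j})` (each conditional entropy being a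
difference of joint entropies). -/
def bindEnt (p : Ω → ℝ) (X : ∀ i, Ω → S i) (γ : Finset (Fin n)) : ℝ :=
  subEnt p X γ - ∑ i ∈ γ, (subEnt p X γ - subEnt p X (γ.erase i))

/-- The O-information `Ω(X^γ) = C(X^γ) - B(X^γ)`. -/
def oInfo (p : Ω → ℝ) (X : ∀ i, Ω → S i) (γ : Finset (Fin n)) : ℝ :=
  totCorr p X γ - bindEnt p X γ

/-- `π` is a partition of `{1,…,n}`: nonempty pairwise disjoint cells covering everything. -/
def IsPartition {n : ℕ} (π : Finset (Finset (Fin n))) : Prop :=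
  (∀ α ∈ π, α.Nonempty) ∧ (π : Set (Finset (Fin n))).PairwiseDisjoint id ∧
    π.sup id = Finset.univ

/-- `πb` is obtained from `πa` by splitting exactly one cell `α` of `πa` into
two nonempty (disjoint) cells `β` and `β'`. -/
def ElemRefinement {n : ℕ} (πa πb : Finset (Finset (Fin n))) : Prop :=
  ∃ α β β', α ∈ πa ∧ β.Nonempty ∧ β'.Nonempty ∧ Disjoint β β' ∧ β ∪ β' = α ∧
    πb = insert β (insert β' (πa.erase α))

/-- Partition entropy `H(π) = Σ_{α ∈ π} H(X^α)`. -/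
def partEnt (p : Ω → ℝ) (X : ∀ i, Ω → S i) (π : Finset (Finset (Fin n))) : ℝ :=
  ∑ α ∈ π, subEnt p X α

/-- Partition residual entropy `R(π) = Σ_{α ∈ π} H(X^α ∣ X^{other cells})`,
each conditional entropy written as a difference of joint entropies. -/
def partRes (p : Ω → ℝ) (X : ∀ i, Ω → S i) (π : Finset (Finset (Fin n))) : ℝ :=
  ∑ α ∈ π, (subEnt p X (α ∪ (π.erase α).sup id) - subEnt p X ((π.erase α).sup id))

lemma probOf_nonneg (p : Ω → ℝ) (hp : ∀ ω, 0 ≤ p ω) (A : Finset Ω) : 0 ≤ probOf p A :=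
  Finset.sum_nonneg fun ω _ => hp ω

lemma probOf_mono (p : Ω → ℝ) (hp : ∀ ω, 0 ≤ p ω) {A B : Finset Ω} (h : A ⊆ B) :
    probOf p A ≤ probOf p B :=
  Finset.sum_le_sum_of_subset_of_nonneg h fun ω _ _ => hp ω

lemma marg {A B : Type*} [Fintype A] [DecidableEq A] [Fintype B] [DecidableEq B]
    (p : Ω → ℝ) (W : Ω → A) (g : A → B) (b : B) :
    probOf p (univ.filter fun ω => g (W ω) = b)
      = ∑ a ∈ univ.filter fun a => g a = b, probOf p (univ.filter fun ω => W ω = a) := by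
  simp only [probOf, Finset.sum_filter]
  have : ∀ a : A, (if g a = b then ∑ ω : Ω, (if W ω = a then p ω else 0) else 0)
      = ∑ ω : Ω, (if g a = b then (if W ω = a then p ω else 0) else 0) := by
    intro a; split <;> simp
  simp only [this]
  rw [Finset.sum_comm]
  refine Finset.sum_congr rfl fun ω _ => ?_
  rw [Finset.sum_eq_single (W ω)]
  · simp
  · intro a _ ha
    simp [Ne.symm ha]
  · simp

lemma sum_probOf {A : Type*} [Fintype A] [DecidableEq A] (p : Ω → ℝ) (W : Ω → A) :
    ∑ a : A, probOf p (univ.filter fun ω => W ω = a) = ∑ ω, p ω := by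
  simp only [probOf, Finset.sum_filter]
  rw [Finset.sum_comm]
  refine Finset.sum_congr rfl fun ω _ => ?_
  simp

lemma shEnt_comp {A B : Type*} [Fintype A] [DecidableEq A] [Fintype B] [DecidableEq B]
    (p : Ω → ℝ) (W : Ω → A) (g : A → B) :
    shEnt p (fun ω => g (W ω)) = -∑ a : A, probOf p (univ.filter fun ω => W ω = a) *
      Real.logb 2 (probOf p (univ.filter fun ω => g (W ω) = g a)) := by
  unfold shEnt
  rw [neg_inj, ← Finset.sum_fiberwise_of_maps_to (g := g) (fun a _ => mem_univ (g a))]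
  refine Finset.sum_congr rfl fun b _ => ?_
  have h1 : ∀ a ∈ univ.filter fun a => g a = b,
      probOf p (univ.filter fun ω => W ω = a) *
        Real.logb 2 (probOf p (univ.filter fun ω => g (W ω) = g a))
      = probOf p (univ.filter fun ω => W ω = a) *
        Real.logb 2 (probOf p (univ.filter fun ω => g (W ω) = b)) := by
    intro a ha; rw [(mem_filter.1 ha).2]
  rw [Finset.sum_congr rfl h1, ← Finset.sum_mul, ← marg p W g b]

lemma shEnt_comp_inj {A B : Type*} [Fintype A] [DecidableEq A] [Fintype B] [DecidableEq B]
    (p : Ω → ℝ) (W : Ω → A) {g : A → B} (hg : Function.Injective g) :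
    shEnt p (fun ω => g (W ω)) = shEnt p W := by
  rw [shEnt_comp p W g]
  unfold shEnt
  rw [neg_inj]
  refine Finset.sum_congr rfl fun a _ => ?_
  have : (univ.filter fun ω => g (W ω) = g a) = (univ.filter fun ω => W ω = a) := by
    ext ω; simp [hg.eq_iff]
  rw [this]


lemma key_ineq {p' q1 q2 r : ℝ} (hp' : 0 ≤ p') (h1 : p' ≤ q1) (h2 : p' ≤ q2) (h4 : q1 ≤ r) :
    (p' - q1 * q2 / r) / Real.log 2 ≤
      p' * (Real.logb 2 p' + Real.logb 2 r - Real.logb 2 q1 - Real.logb 2 q2) := by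
  have hlog2 : 0 < Real.log 2 := Real.log_pos one_lt_two
  rcases eq_or_lt_of_le hp' with h0 | h0
  · rw [← h0]
    simp only [zero_sub, zero_mul]
    rw [div_le_iff₀ hlog2, zero_mul, neg_nonpos]
    exact div_nonneg (mul_nonneg (h0 ▸ h1) (h0 ▸ h2)) (le_trans (h0 ▸ h1) h4)
  · have hq1 : 0 < q1 := lt_of_lt_of_le h0 h1
    have hq2 : 0 < q2 := lt_of_lt_of_le h0 h2
    have hr : 0 < r := lt_of_lt_of_le hq1 h4
    set q : ℝ := q1 * q2 / r with hq
    have hqpos : 0 < q := div_pos (mul_pos hq1 hq2) hr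
    have hlogs : Real.logb 2 p' + Real.logb 2 r - Real.logb 2 q1 - Real.logb 2 q2
        = Real.log (p' / q) / Real.log 2 := by
      rw [hq, Real.log_div (ne_of_gt h0) (ne_of_gt hqpos), Real.log_div
        (ne_of_gt (mul_pos hq1 hq2)) (ne_of_gt hr), Real.log_mul (ne_of_gt hq1) (ne_of_gt hq2)]
      simp only [Real.logb]
      ring
    have hrw : Real.log (p' / q) = - Real.log (q / p') := by
      rw [Real.log_div (ne_of_gt h0) (ne_of_gt hqpos),
        Real.log_div (ne_of_gt hqpos) (ne_of_gt h0)]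
      ring
    rw [hlogs, hrw, ← mul_div_assoc, div_le_div_iff_of_pos_right hlog2]
    have hineq := Real.log_le_sub_one_of_pos (div_pos hqpos h0)
    have hmul : p' * (q / p') = q := by field_simp
    nlinarith [mul_le_mul_of_nonneg_left hineq (le_of_lt h0)]

lemma marg_pair {S U : Type*} [Fintype S] [DecidableEq S] [Fintype U] [DecidableEq U]
    (p : Ω → ℝ) (X : Ω → S) (Z : Ω → U) (u : U) :
    ∑ s : S, probOf p (univ.filter fun ω => (X ω, Z ω) = (s, u))
      = probOf p (univ.filter fun ω => Z ω = u) := by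
  simp only [probOf, Finset.sum_filter]
  rw [Finset.sum_comm]
  refine Finset.sum_congr rfl fun ω _ => ?_
  rw [Finset.sum_eq_single (X ω)]
  · simp [Prod.ext_iff]
  · intro s _ hs; simp [Prod.ext_iff, Ne.symm hs]
  · simp

lemma condMutInfo_nonneg {S T U : Type*} [Fintype S] [DecidableEq S] [Fintype T] [DecidableEq T]
    [Fintype U] [DecidableEq U] (p : Ω → ℝ) (hp : ∀ ω, 0 ≤ p ω) (hp1 : ∑ ω, p ω = 1)
    (X : Ω → S) (Y : Ω → T) (Z : Ω → U) : 0 ≤ condMutInfo p X Y Z := by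
  classical
  set P : S × T × U → ℝ := fun a => probOf p (univ.filter fun ω => (X ω, Y ω, Z ω) = a) with hP
  set f1 : S × T × U → ℝ := fun a => probOf p (univ.filter fun ω => (X ω, Z ω) = (a.1, a.2.2))
    with hf1
  set f2 : S × T × U → ℝ := fun a => probOf p (univ.filter fun ω => (Y ω, Z ω) = a.2) with hf2
  set f4 : S × T × U → ℝ := fun a => probOf p (univ.filter fun ω => Z ω = a.2.2) with hf4
  have h1 : shEnt p (fun ω => (X ω, Z ω)) = -∑ a : S × T × U, P a * Real.logb 2 (f1 a) := by
    simpa [hP, hf1] using shEnt_comp p (fun ω => (X ω, Y ω, Z ω)) (fun a => (a.1, a.2.2))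
  have h2 : shEnt p (fun ω => (Y ω, Z ω)) = -∑ a : S × T × U, P a * Real.logb 2 (f2 a) := by
    simpa [hP, hf2] using shEnt_comp p (fun ω => (X ω, Y ω, Z ω)) (fun a => a.2)
  have h4 : shEnt p Z = -∑ a : S × T × U, P a * Real.logb 2 (f4 a) := by
    simpa [hP, hf4] using shEnt_comp p (fun ω => (X ω, Y ω, Z ω)) (fun a => a.2.2)
  have h3 : shEnt p (fun ω => (X ω, Y ω, Z ω)) = -∑ a : S × T × U, P a * Real.logb 2 (P a) := rfl
  have hrepr : condMutInfo p X Y Z = ∑ a : S × T × U,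
      (P a * Real.logb 2 (P a) + P a * Real.logb 2 (f4 a)
        - P a * Real.logb 2 (f1 a) - P a * Real.logb 2 (f2 a)) := by
    rw [condMutInfo, h1, h2, h3, h4, Finset.sum_sub_distrib, Finset.sum_sub_distrib,
      Finset.sum_add_distrib]
    ring
  -- pointwise inclusions
  have hPle1 : ∀ a : S × T × U, P a ≤ f1 a := by
    intro a
    refine probOf_mono p hp ?_
    intro ω hω
    simp only [mem_filter, mem_univ, true_and] at hω ⊢
    rw [← hω]
  have hPle2 : ∀ a : S × T × U, P a ≤ f2 a := by
    intro a
    refine probOf_mono p hp ?_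
    intro ω hω
    simp only [mem_filter, mem_univ, true_and] at hω ⊢
    rw [← hω]
  have hf14 : ∀ a : S × T × U, f1 a ≤ f4 a := by
    intro a
    refine probOf_mono p hp ?_
    intro ω hω
    simp only [mem_filter, mem_univ, true_and] at hω ⊢
    have := congrArg Prod.snd hω
    simpa using this
  have hf24 : ∀ a : S × T × U, f2 a ≤ f4 a := by
    intro a
    refine probOf_mono p hp ?_
    intro ω hω
    simp only [mem_filter, mem_univ, true_and] at hω ⊢
    have := congrArg Prod.snd hω
    simpa using this
  have hsumP : ∑ a : S × T × U, P a = 1 := by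
    rw [hP]
    exact (sum_probOf p _).trans hp1
  have hsumq : ∑ a : S × T × U, f1 a * f2 a / f4 a = 1 := by
    rw [Fintype.sum_prod_type, Finset.sum_comm]
    have hb : ∀ b : T × U, ∑ s : S, f1 (s, b) * f2 (s, b) / f4 (s, b)
        = probOf p (univ.filter fun ω => (Y ω, Z ω) = b) := by
      intro b
      simp only [hf1, hf2, hf4]
      by_cases hz : probOf p (univ.filter fun ω => Z ω = b.2) = 0
      · have hg1 : ∀ s : S, probOf p (univ.filter fun ω => (X ω, Z ω) = (s, b.2)) = 0 := by
          intro s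
          refine le_antisymm ?_ (probOf_nonneg p hp _)
          rw [← hz]
          refine probOf_mono p hp ?_
          intro ω hω
          simp only [mem_filter, mem_univ, true_and] at hω ⊢
          have := congrArg Prod.snd hω
          simpa using this
        have hg2 : probOf p (univ.filter fun ω => (Y ω, Z ω) = b) = 0 := by
          refine le_antisymm ?_ (probOf_nonneg p hp _)
          rw [← hz]
          refine probOf_mono p hp ?_
          intro ω hω
          simp only [mem_filter, mem_univ, true_and] at hω ⊢
          have := congrArg Prod.snd hω
          simpa using this
        simp [hg1, hg2]
      · have : ∀ s : S, probOf p (univ.filter fun ω => (X ω, Z ω) = (s, b.2))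
            * probOf p (univ.filter fun ω => (Y ω, Z ω) = b)
            / probOf p (univ.filter fun ω => Z ω = b.2)
            = probOf p (univ.filter fun ω => (X ω, Z ω) = (s, b.2))
            * (probOf p (univ.filter fun ω => (Y ω, Z ω) = b)
              / probOf p (univ.filter fun ω => Z ω = b.2)) := fun s => by ring
        simp only [this]
        rw [← Finset.sum_mul, marg_pair p X Z b.2]
        field_simp
    rw [Finset.sum_congr rfl fun b _ => hb b]
    exact (sum_probOf p _).trans hp1
  have hterm : ∀ a : S × T × U, (P a - f1 a * f2 a / f4 a) / Real.log 2
      ≤ P a * Real.logb 2 (P a) + P a * Real.logb 2 (f4 a)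
        - P a * Real.logb 2 (f1 a) - P a * Real.logb 2 (f2 a) := by
    intro a
    have h := key_ineq (probOf_nonneg p hp _) (hPle1 a) (hPle2 a) (hf14 a)
    calc (P a - f1 a * f2 a / f4 a) / Real.log 2
        ≤ P a * (Real.logb 2 (P a) + Real.logb 2 (f4 a)
            - Real.logb 2 (f1 a) - Real.logb 2 (f2 a)) := h
      _ = _ := by ring
  calc (0 : ℝ) = (∑ a : S × T × U, P a - ∑ a : S × T × U, f1 a * f2 a / f4 a) / Real.log 2 := by
        rw [hsumP, hsumq]; simp
    _ = ∑ a : S × T × U, (P a - f1 a * f2 a / f4 a) / Real.log 2 := by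
        rw [← Finset.sum_sub_distrib, Finset.sum_div]
    _ ≤ ∑ a : S × T × U, (P a * Real.logb 2 (P a) + P a * Real.logb 2 (f4 a)
          - P a * Real.logb 2 (f1 a) - P a * Real.logb 2 (f2 a)) :=
        Finset.sum_le_sum fun a _ => hterm a
    _ = condMutInfo p X Y Z := hrepr.symm

lemma shEnt_pair_ge {S U : Type*} [Fintype S] [DecidableEq S] [Fintype U] [DecidableEq U]
    (p : Ω → ℝ) (hp : ∀ ω, 0 ≤ p ω) (X : Ω → S) (Z : Ω → U) :
    shEnt p Z ≤ shEnt p (fun ω => (X ω, Z ω)) := by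
  classical
  set P : S × U → ℝ := fun a => probOf p (univ.filter fun ω => (X ω, Z ω) = a) with hP
  set fz : S × U → ℝ := fun a => probOf p (univ.filter fun ω => Z ω = a.2) with hfz
  have hz : shEnt p Z = -∑ a : S × U, P a * Real.logb 2 (fz a) := by
    simpa [hP, hfz] using shEnt_comp p (fun ω => (X ω, Z ω)) (fun a => a.2)
  have hw : shEnt p (fun ω => (X ω, Z ω)) = -∑ a : S × U, P a * Real.logb 2 (P a) := rfl
  rw [hz, hw, neg_le_neg_iff]
  refine Finset.sum_le_sum fun a _ => ?_
  have hPnn : 0 ≤ P a := probOf_nonneg p hp _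
  have hle : P a ≤ fz a := by
    refine probOf_mono p hp ?_
    intro ω hω
    simp only [mem_filter, mem_univ, true_and] at hω ⊢
    have := congrArg Prod.snd hω
    simpa using this
  rcases eq_or_lt_of_le hPnn with h0 | h0
  · rw [← h0]; ring_nf; exact le_refl _
  · exact mul_le_mul_of_nonneg_left
      (Real.logb_le_logb_of_le one_lt_two h0 hle) (le_of_lt h0)


lemma subEnt_pair (p : Ω → ℝ) (X : ∀ i, Ω → S i) (β δ : Finset (Fin n)) :
    shEnt p (fun ω => (restrict X β ω, restrict X δ ω)) = subEnt p X (β ∪ δ) := by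
  classical
  have hg : Function.Injective
      (fun v : (∀ i : (β ∪ δ : Finset (Fin n)), S i.1) =>
        ((fun i : β => v ⟨i.1, mem_union_left δ i.2⟩),
         (fun i : δ => v ⟨i.1, mem_union_right β i.2⟩))) := by
    intro v w h
    funext j
    rcases mem_union.1 j.2 with hj | hj
    · have := congrFun (congrArg Prod.fst h) ⟨j.1, hj⟩
      simpa using this
    · have := congrFun (congrArg Prod.snd h) ⟨j.1, hj⟩
      simpa using this
  have := shEnt_comp_inj p (restrict X (β ∪ δ)) hg
  exact this


set_option maxHeartbeats 800000 in
lemma subEnt_triple (p : Ω → ℝ) (X : ∀ i, Ω → S i) (β β' δ : Finset (Fin n)) :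
    shEnt p (fun ω => (restrict X β ω, restrict X β' ω, restrict X δ ω))
      = subEnt p X (β ∪ β' ∪ δ) := by
  classical
  have e1 : shEnt p (fun ω => (restrict X β ω, restrict X β' ω, restrict X δ ω))
      = shEnt p (fun ω => (restrict X β ω, restrict X (β' ∪ δ) ω)) := by
    have hg : Function.Injective
        (fun w : (∀ i : β, S i.1) × (∀ i : (β' ∪ δ : Finset (Fin n)), S i.1) =>
          (w.1, (fun i : β' => w.2 ⟨i.1, mem_union_left δ i.2⟩),
            (fun i : δ => w.2 ⟨i.1, mem_union_right β' i.2⟩))) := by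
      intro v w h
      have h1 := congrArg Prod.fst h
      have h2 := congrArg (fun x => x.2.1) h
      have h3 := congrArg (fun x => x.2.2) h
      simp only at h1 h2 h3
      ext1
      · exact h1
      · funext j
        rcases mem_union.1 j.2 with hj | hj
        · have := congrFun h2 ⟨j.1, hj⟩
          simpa using this
        · have := congrFun h3 ⟨j.1, hj⟩
          simpa using this
    exact (shEnt_comp_inj p
      (fun ω => (restrict X β ω, restrict X (β' ∪ δ) ω)) hg).symm ▸ rfl
  rw [e1, subEnt_pair p X β (β' ∪ δ), Finset.union_assoc]

lemma subEnt_submod (p : Ω → ℝ) (hp : ∀ ω, 0 ≤ p ω) (hp1 : ∑ ω, p ω = 1)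
    (X : ∀ i, Ω → S i) (A B : Finset (Fin n)) :
    subEnt p X (A ∪ B) + subEnt p X (A ∩ B) ≤ subEnt p X A + subEnt p X B := by
  classical
  have h := condMutInfo_nonneg p hp hp1 (restrict X (A \ B)) (restrict X (B \ A))
    (restrict X (A ∩ B))
  rw [condMutInfo] at h
  rw [subEnt_pair p X (A \ B) (A ∩ B), subEnt_pair p X (B \ A) (A ∩ B),
    subEnt_triple p X (A \ B) (B \ A) (A ∩ B)] at h
  have e1 : A \ B ∪ A ∩ B = A := by ext x; simp; tauto
  have e2 : B \ A ∪ A ∩ B = B := by ext x; simp; tauto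
  have e3 : A \ B ∪ B \ A ∪ A ∩ B = A ∪ B := by ext x; simp; tauto
  rw [e1, e2, e3] at h
  have e4 : shEnt p (restrict X (A ∩ B)) = subEnt p X (A ∩ B) := rfl
  rw [e4] at h
  linarith

lemma subEnt_mono (p : Ω → ℝ) (hp : ∀ ω, 0 ≤ p ω)
    (X : ∀ i, Ω → S i) {A B : Finset (Fin n)} (h : A ⊆ B) :
    subEnt p X A ≤ subEnt p X B := by
  classical
  have hge := shEnt_pair_ge p hp (restrict X (B \ A)) (restrict X A)
  rw [subEnt_pair p X (B \ A) A, Finset.sdiff_union_of_subset h] at hge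
  exact hge

lemma sup_erase_eq {π : Finset (Finset (Fin n))} (hπdisj : (π : Set (Finset (Fin n))).PairwiseDisjoint id)
    (hπsup : π.sup id = Finset.univ) {α : Finset (Fin n)} (hα : α ∈ π) :
    (π.erase α).sup id = Finset.univ \ α := by
  ext x
  simp only [Finset.mem_sup, Finset.mem_erase, id, Finset.mem_sdiff, Finset.mem_univ, true_and]
  constructor
  · rintro ⟨α', ⟨hne, hα'⟩, hx⟩
    intro hxα
    have hd := hπdisj hα' hα hne
    exact (Finset.disjoint_left.1 hd) hx hxα
  · intro hx
    have : x ∈ π.sup id := hπsup ▸ Finset.mem_univ x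
    rcases Finset.mem_sup.1 this with ⟨α', hα', hx'⟩
    refine ⟨α', ⟨?_, hα'⟩, hx'⟩
    rintro rfl
    exact hx hx'

lemma partRes_claim (p : Ω → ℝ) (hp : ∀ ω, 0 ≤ p ω) (hp1 : ∑ ω, p ω = 1)
    (X : ∀ i, Ω → S i) (T : Finset (Finset (Fin n)))
    (hdisj : (T : Set (Finset (Fin n))).PairwiseDisjoint id) :
    ∑ β ∈ T, (subEnt p X Finset.univ - subEnt p X (Finset.univ \ β))
      ≤ subEnt p X Finset.univ - subEnt p X (Finset.univ \ T.sup id) := by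
  classical
  induction T using Finset.induction_on with
  | empty => simp
  | @insert β T hβT ih =>
    have hdisj' : (T : Set (Finset (Fin n))).PairwiseDisjoint id :=
      hdisj.subset (by simp [Finset.coe_insert, Set.subset_insert])
    have ihT := ih hdisj'
    have hβdisj : Disjoint β (T.sup id) := by
      rw [Finset.disjoint_sup_right]
      intro γ hγ
      exact hdisj (by simp) (by simp [hγ]) (fun h => hβT (h ▸ hγ))
    have hsub := subEnt_submod p hp hp1 X (Finset.univ \ β) (Finset.univ \ T.sup id)
    have e1 : (Finset.univ \ β) ∪ (Finset.univ \ T.sup id) = (Finset.univ : Finset (Fin n)) := by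
      ext x
      have hd : x ∈ β → x ∈ T.sup id → False :=
        fun h1 h2 => (Finset.disjoint_left.mp hβdisj) h1 h2
      simp only [Finset.mem_union, Finset.mem_sdiff, Finset.mem_univ, true_and, iff_true]
      tauto
    have e2 : (Finset.univ \ β) ∩ (Finset.univ \ T.sup id)
        = Finset.univ \ (β ∪ T.sup id) := by
      ext x
      simp only [Finset.mem_inter, Finset.mem_sdiff, Finset.mem_univ, true_and,
        Finset.mem_union]
      tauto
    rw [e1, e2] at hsub
    rw [Finset.sum_insert hβT, Finset.sup_insert]
    have : (id β ⊔ T.sup id) = β ∪ T.sup id := rfl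
    rw [this]
    linarith

/-- residual entropy is monotone under refinement: if `π_a` and
`π_b` are partitions of `{1,…,n}` and `π_b` is finer than `π_a` (every cell of
`π_b` is contained in a cell of `π_a`), then `R(π_b) ≤ R(π_a)`. -/
theorem partRes_mono_of_finer
    (p : Ω → ℝ) (hp : ∀ ω, 0 ≤ p ω) (hp1 : ∑ ω, p ω = 1)
    (X : ∀ i, Ω → S i)
    (πa πb : Finset (Finset (Fin n)))
    (ha : IsPartition πa) (hb : IsPartition πb)
    (hfine : ∀ β ∈ πb, ∃ α ∈ πa, β ⊆ α) :
    partRes p X πb ≤ partRes p X πa := by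
  classical
  obtain ⟨-, hadisj, hasup⟩ := ha
  obtain ⟨-, hbdisj, hbsup⟩ := hb
  have hres : ∀ (π : Finset (Finset (Fin n))),
      (π : Set (Finset (Fin n))).PairwiseDisjoint id → π.sup id = Finset.univ →
      partRes p X π
        = ∑ α ∈ π, (subEnt p X Finset.univ - subEnt p X (Finset.univ \ α)) := by
    intro π hd hs
    unfold partRes
    refine Finset.sum_congr rfl fun α hα => ?_
    rw [sup_erase_eq hd hs hα, Finset.union_sdiff_of_subset (Finset.subset_univ α)]
  rw [hres πa hadisj hasup, hres πb hbdisj hbsup]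
  have hchoice : ∀ β, β ∈ πb → ∃ α, α ∈ πa ∧ β ⊆ α := by
    intro β hβ
    obtain ⟨α, h1, h2⟩ := hfine β hβ
    exact ⟨α, h1, h2⟩
  set f : Finset (Fin n) → Finset (Fin n) :=
    fun β => if h : ∃ α, α ∈ πa ∧ β ⊆ α then h.choose else ∅ with hf
  have hfspec : ∀ β ∈ πb, f β ∈ πa ∧ β ⊆ f β := by
    intro β hβ
    have h := hchoice β hβ
    rw [hf]
    simp only [dif_pos h]
    exact h.choose_spec
  rw [← Finset.sum_fiberwise_of_maps_to (g := f) (fun β hβ => (hfspec β hβ).1)]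
  refine Finset.sum_le_sum fun α hα => ?_
  set T := πb.filter fun β => f β = α with hT
  have hTsubπb : T ⊆ πb := by rw [hT]; exact Finset.filter_subset _ _
  have hTdisj : (T : Set (Finset (Fin n))).PairwiseDisjoint id :=
    hbdisj.subset (Finset.coe_subset.2 hTsubπb)
  have h1 := partRes_claim p hp hp1 X T hTdisj
  have hTle : T.sup id ≤ α := by
    refine Finset.sup_le fun β hβ => ?_
    rw [hT, Finset.mem_filter] at hβ
    have h := (hfspec β hβ.1).2
    rw [hβ.2] at h
    exact Finset.le_iff_subset.2 h
  have hTsub : T.sup id ⊆ α := hTle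
  have h2 : subEnt p X (Finset.univ \ α) ≤ subEnt p X (Finset.univ \ T.sup id) :=
    subEnt_mono p hp X (Finset.sdiff_subset_sdiff (Finset.Subset.refl _) hTsub)
  linarith
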